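/- arXiv:1511.01773 — 7 statements merged into one kernel-verified Lean document; each statement's English description precedes it below -/
import Mathlib

section
/- Let λ be a real number with 0 < λ < 1, set θ := λ/(1+λ)², and define Y_k := −(λ²/(1+λ+λ²))·(1−λ^k)/(1−λ^{k+2}) for every integer k ≥ 0. Then Y_0 = 0, and for every k ≥ 1 one has 1 + Y_{k−1} ≠ 0 and Y_k = −(θ/(1−θ)²)·(θ − (1−θ)Y_{k−1})/(1 + Y_{k−1}). -/
/-- The closed form `Y_k = -(λ²/(1+λ+λ²))·(1-λ^k)/(1-λ^{k+2})` satisfies `Y_0 = 0`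
and the recursion `Y_k = -(θ/(1-θ)²)·(θ-(1-θ)Y_{k-1})/(1+Y_{k-1})` with `θ = λ/(1+λ)²`. -/
theorem stmt3 (lam : ℝ) (hlam0 : 0 < lam) (hlam1 : lam < 1)
    (θ : ℝ) (hθ : θ = lam / (1 + lam) ^ 2)
    (Y : ℕ → ℝ)
    (hY : ∀ k, Y k = -(lam ^ 2 / (1 + lam + lam ^ 2)) * (1 - lam ^ k) / (1 - lam ^ (k + 2))) :
    Y 0 = 0 ∧ ∀ k, 1 ≤ k → 1 + Y (k - 1) ≠ 0 ∧
      Y k = -(θ / (1 - θ) ^ 2) * (θ - (1 - θ) * Y (k - 1)) / (1 + Y (k - 1)) := by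
  have hpow : ∀ n : ℕ, 1 ≤ n → lam ^ n < 1 := fun n hn =>
    pow_lt_one₀ hlam0.le hlam1 (by omega)
  have hq : (0:ℝ) < 1 + lam + lam ^ 2 := by positivity
  have hq' : (1:ℝ) + lam + lam ^ 2 ≠ 0 := hq.ne'
  have h1l : (0:ℝ) < 1 + lam := by linarith
  constructor
  · rw [hY 0]; simp
  · intro k hk
    obtain ⟨n, rfl⟩ : ∃ n, k = n + 1 := ⟨k - 1, by omega⟩
    simp only [Nat.add_sub_cancel]
    have hd1 : (0:ℝ) < 1 - lam ^ (n + 2) := by linarith [hpow (n+2) (by omega)]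
    have hd2 : (0:ℝ) < 1 - lam ^ (n + 3) := by linarith [hpow (n+3) (by omega)]
    have key : 1 + Y n = ((1 + lam) * (1 - lam ^ (n + 3))) /
        ((1 + lam + lam ^ 2) * (1 - lam ^ (n + 2))) := by
      rw [hY n]
      field_simp
      ring
    have hYne : 1 + Y n ≠ 0 := by
      rw [key]
      positivity
    refine ⟨hYne, ?_⟩
    have hθ1 : 1 - θ = (1 + lam + lam ^ 2) / (1 + lam) ^ 2 := by
      rw [hθ]; field_simp; ring
    rw [eq_div_iff hYne, key, hY (n+1), hY n, hθ1, hθ]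
    field_simp
    ring
end

section
/- Let K be a field and g, R₁, S₀, h₃, T, Φ ∈ K with R₁ ≠ 0 and 1 − R₁TΦ ≠ 0. Set R' := R₁/(1 − R₁TΦ) and T' := R₁²Φ/(1 − R₁TΦ). Assume 1/R₁ = 1 − 2gS₀ − gR₁²h₃ and 1/R' = 1 − 2gS₀ − g(T + T'). Then R₁T²Φ² + (gR₁² + gR₁³h₃T − T − gR₁T²)Φ + (gT − gR₁²h₃) = 0. -/
/-- Consistency of the new slice recursion with the classical system forces the kernel
`Φ` to satisfy Tutte's quadratic equation
`R₁T²Φ² + (gR₁² + gR₁³h₃T - T - gR₁T²)Φ + (gT - gR₁²h₃) = 0`. -/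
theorem stmt8 {K : Type*} [Field K] (g R₁ S₀ h₃ T Φ : K)
    (hR₁ : R₁ ≠ 0) (hden : 1 - R₁ * T * Φ ≠ 0)
    (R' T' : K)
    (hR' : R' = R₁ / (1 - R₁ * T * Φ))
    (hT' : T' = R₁ ^ 2 * Φ / (1 - R₁ * T * Φ))
    (h1 : 1 / R₁ = 1 - 2 * g * S₀ - g * R₁ ^ 2 * h₃)
    (h2 : 1 / R' = 1 - 2 * g * S₀ - g * (T + T')) :
    R₁ * T ^ 2 * Φ ^ 2 + (g * R₁ ^ 2 + g * R₁ ^ 3 * h₃ * T - T - g * R₁ * T ^ 2) * Φ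
      + (g * T - g * R₁ ^ 2 * h₃) = 0 := by
  subst hR' hT'
  field_simp at h1 h2
  have key : R₁ * (R₁ * T ^ 2 * Φ ^ 2
      + (g * R₁ ^ 2 + g * R₁ ^ 3 * h₃ * T - T - g * R₁ * T ^ 2) * Φ
      + (g * T - g * R₁ ^ 2 * h₃)) = 0 := by
    linear_combination h2 - (1 - R₁ * T * Φ) * h1
  rcases mul_eq_zero.mp key with h | h
  · exact absurd h hR₁
  · exact h
end

section
/- Let λ be a real number with 0 < λ < 1, set θ := λ/(1+λ)², and for each integer k ≥ 0 define Y_k := −(λ²/(1+λ+λ²))·(1−λ^k)/(1−λ^{k+2}) and t_k := √(λ/(1+λ+λ²))·((1−λ^k)(1−λ^{k+3}))/((1−λ^{k+1})(1−λ^{k+2})). Then for every k ≥ 0, (1−θ)Y_k − θ ≠ 0 and √((1−θ)³/θ)·(Y_k(1+Y_k))/((1−θ)Y_k − θ) = t_k. -/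
/-- From the closed form of `Y_k`, the slice generating function
`t_k = √((1-θ)³/θ)·Y_k(1+Y_k)/((1-θ)Y_k - θ)` takes the closed form
`t_k = √(λ/(1+λ+λ²))·(1-λ^k)(1-λ^{k+3})/((1-λ^{k+1})(1-λ^{k+2}))`. -/
theorem stmt10 (lam : ℝ) (hlam0 : 0 < lam) (hlam1 : lam < 1)
    (θ : ℝ) (hθ : θ = lam / (1 + lam) ^ 2)
    (Y t : ℕ → ℝ)
    (hY : ∀ k, Y k = -(lam ^ 2 / (1 + lam + lam ^ 2)) * (1 - lam ^ k) / (1 - lam ^ (k + 2)))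
    (ht : ∀ k, t k = Real.sqrt (lam / (1 + lam + lam ^ 2))
        * ((1 - lam ^ k) * (1 - lam ^ (k + 3)))
        / ((1 - lam ^ (k + 1)) * (1 - lam ^ (k + 2)))) :
    ∀ k, (1 - θ) * Y k - θ ≠ 0 ∧
      Real.sqrt ((1 - θ) ^ 3 / θ) * (Y k * (1 + Y k)) / ((1 - θ) * Y k - θ) = t k := by
  intro k
  have hS : (0:ℝ) < 1 + lam + lam ^ 2 := by positivity
  have h1l : (0:ℝ) < 1 + lam := by linarith
  have hp1 : lam ^ (k + 1) < 1 := pow_lt_one₀ hlam0.le hlam1 (by omega)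
  have hp2 : lam ^ (k + 2) < 1 := pow_lt_one₀ hlam0.le hlam1 (by omega)
  have hd1 : (1 : ℝ) - lam ^ (k + 1) ≠ 0 := by linarith
  have hd2 : (1 : ℝ) - lam ^ (k + 2) ≠ 0 := by linarith
  have hW : (1 - θ) * Y k - θ
      = -(lam * (1 - lam ^ (k + 1))) / ((1 + lam) * (1 - lam ^ (k + 2))) := by
    rw [hθ, hY k]
    field_simp
    ring
  have hWne : (1 - θ) * Y k - θ ≠ 0 := by
    rw [hW]
    apply div_ne_zero
    · have : lam * (1 - lam ^ (k + 1)) > 0 := by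
        apply mul_pos hlam0; linarith
      intro h; nlinarith
    · positivity
  refine ⟨hWne, ?_⟩
  have hc : (0:ℝ) < (1 + lam + lam ^ 2) ^ 2 / (lam * (1 + lam) ^ 2) := by positivity
  have hsqrt : Real.sqrt ((1 - θ) ^ 3 / θ)
      = Real.sqrt (lam / (1 + lam + lam ^ 2))
        * ((1 + lam + lam ^ 2) ^ 2 / (lam * (1 + lam) ^ 2)) := by
    have h : (1 - θ) ^ 3 / θ
        = (lam / (1 + lam + lam ^ 2))
          * ((1 + lam + lam ^ 2) ^ 2 / (lam * (1 + lam) ^ 2)) ^ 2 := by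
      rw [hθ]; field_simp; ring
    rw [h, Real.sqrt_mul (by positivity), Real.sqrt_sq hc.le]
  rw [hsqrt, hW, hY k, ht k]
  field_simp
  ring
end

section
/- Let λ be a real number with 0 < λ < 1, and for each integer k ≥ 0 define t_k := √(λ/(1+λ+λ²))·((1−λ^k)(1−λ^{k+3}))/((1−λ^{k+1})(1−λ^{k+2})) and r_k := ((1+λ)²/(1+λ+λ²))·((1−λ^k)(1−λ^{k+2}))/(1−λ^{k+1})². Then for every k ≥ 1, r_k = 1 + t_{k−1}·t_k. -/
/-!
Writing `q j = 1 - λ ^ j`, the square root in `t` cancels in the product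
`t (k-1) * t k = λ / (1 + λ + λ²) * q (k-1) * q (k+3) / q (k+1) ^ 2`, the factors `q k` and
`q (k+2)` telescoping away. Clearing the common denominator, the claim becomes the polynomial
identity `(1 + λ)² q k q (k+2) = (1 + λ + λ²) q (k+1)² + λ q (k-1) q (k+3)`, which holds over any
commutative ring.
-/

theorem one_add_sq_mul_one_sub_pow_mul {R : Type*} [CommRing R] (a : R) (n : ℕ) :
    (1 + a) ^ 2 * ((1 - a ^ (n + 1)) * (1 - a ^ (n + 3))) =
      (1 + a + a ^ 2) * (1 - a ^ (n + 2)) ^ 2 + a * ((1 - a ^ n) * (1 - a ^ (n + 4))) := by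
  simp only [pow_succ]
  ring

theorem one_sub_pow_succ_ne_zero {a : ℝ} (h0 : 0 ≤ a) (h1 : a < 1) (n : ℕ) :
    1 - a ^ (n + 1) ≠ 0 :=
  (sub_pos.2 (pow_lt_one₀ h0 h1 n.succ_ne_zero)).ne'

/-- The closed forms for the slice generating functions of simple triangulations satisfy
`r_k = 1 + t_{k-1}·t_k` for `k ≥ 1`. -/
theorem stmt11 (lam : ℝ) (hlam0 : 0 < lam) (hlam1 : lam < 1)
    (t r : ℕ → ℝ)
    (ht : ∀ k, t k = Real.sqrt (lam / (1 + lam + lam ^ 2))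
        * ((1 - lam ^ k) * (1 - lam ^ (k + 3)))
        / ((1 - lam ^ (k + 1)) * (1 - lam ^ (k + 2))))
    (hr : ∀ k, r k = ((1 + lam) ^ 2 / (1 + lam + lam ^ 2))
        * ((1 - lam ^ k) * (1 - lam ^ (k + 2))) / (1 - lam ^ (k + 1)) ^ 2) :
    ∀ k, 1 ≤ k → r k = 1 + t (k - 1) * t k := by
  intro k hk
  obtain ⟨n, rfl⟩ := Nat.exists_eq_add_of_le' hk
  have hs : 0 < 1 + lam + lam ^ 2 := by positivity
  have hq := one_sub_pow_succ_ne_zero hlam0.le hlam1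
  have hq₁ := hq n
  have hq₂ := hq (n + 1)
  have hq₃ := hq (n + 2)
  have hprod : t n * t (n + 1) = lam / (1 + lam + lam ^ 2) *
      ((1 - lam ^ n) * (1 - lam ^ (n + 4))) / (1 - lam ^ (n + 2)) ^ 2 := by
    rw [ht, ht, div_mul_div_comm, mul_mul_mul_comm,
      Real.mul_self_sqrt (div_nonneg hlam0.le hs.le)]
    field_simp
  rw [hr, Nat.add_sub_cancel, hprod]
  field_simp
  linear_combination one_add_sq_mul_one_sub_pow_mul lam n
end

section
/- Let λ be a real number with λ > 0, and set R_∞ := √(1+10λ+λ²)/(1+λ), g := √(λ(1+λ))/(1+10λ+λ²)^{3/4}, and S_∞ := (R_∞ − 1)/(2gR_∞). Then R_∞ = 1 + 2gR_∞S_∞, S_∞ = g(S_∞² + 2R_∞), and R_∞² = 1 + 8g²R_∞³. -/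
/-! With `D = 1 + 10λ + λ²` one has `g² = λ(1+λ)/D^{3/2}` and `R_∞³ = D^{3/2}/(1+λ)³`, so
`8g²R_∞³ = 8λ/(1+λ)² = (D - (1+λ)²)/(1+λ)² = R_∞² - 1`. Substituting `S_∞ = (R_∞-1)/(2gR_∞)`,
the first equation holds by construction and the second reduces, after clearing denominators,
to exactly this identity. -/

theorem sub_one_div_eq_mul_sq_add_iff {K : Type*} [Field K] [NeZero (2 : K)] {g R : K}
    (hg : g ≠ 0) (hR : R ≠ 0) :
    (R - 1) / (2 * g * R) = g * (((R - 1) / (2 * g * R)) ^ 2 + 2 * R) ↔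
      R ^ 2 = 1 + 8 * g ^ 2 * R ^ 3 := by
  field_simp
  constructor <;> intro h <;> linear_combination h

theorem Real.rpow_three_div_four_sq {x : ℝ} (hx : 0 ≤ x) :
    (x ^ ((3 : ℝ) / 4)) ^ 2 = x * √x := by
  rw [← Real.rpow_natCast, ← Real.rpow_mul hx, Real.sqrt_eq_rpow, ← Real.rpow_one_add' hx]
  all_goals norm_num

theorem sq_eq_one_add_eight_mul_sq_mul_cube_of_param {lam : ℝ} (hlam : 0 ≤ lam) :
    (√(1 + 10 * lam + lam ^ 2) / (1 + lam)) ^ 2 =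
      1 + 8 * (√(lam * (1 + lam)) / (1 + 10 * lam + lam ^ 2) ^ ((3 : ℝ) / 4)) ^ 2 *
        (√(1 + 10 * lam + lam ^ 2) / (1 + lam)) ^ 3 := by
  have hD : 0 < 1 + 10 * lam + lam ^ 2 := by positivity
  have hcube : √(1 + 10 * lam + lam ^ 2) ^ 3 =
      (1 + 10 * lam + lam ^ 2) * √(1 + 10 * lam + lam ^ 2) := by
    rw [pow_succ, Real.sq_sqrt hD.le]
  rw [div_pow, div_pow, div_pow, Real.rpow_three_div_four_sq hD.le, hcube,
    Real.sq_sqrt hD.le, Real.sq_sqrt (by positivity)]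
  field_simp
  ring

/-- The explicit parametrization `R_∞ = √(1+10λ+λ²)/(1+λ)`, `g = √(λ(1+λ))/(1+10λ+λ²)^{3/4}`,
`S_∞ = (R_∞-1)/(2gR_∞)` solves `R_∞ = 1 + 2gR_∞S_∞`, `S_∞ = g(S_∞² + 2R_∞)` and
`R_∞² = 1 + 8g²R_∞³`. -/
theorem stmt15 (lam : ℝ) (hlam : 0 < lam)
    (Rinf g Sinf : ℝ)
    (hR : Rinf = Real.sqrt (1 + 10 * lam + lam ^ 2) / (1 + lam))
    (hg : g = Real.sqrt (lam * (1 + lam)) / (1 + 10 * lam + lam ^ 2) ^ ((3 : ℝ) / 4))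
    (hS : Sinf = (Rinf - 1) / (2 * g * Rinf)) :
    Rinf = 1 + 2 * g * Rinf * Sinf ∧
    Sinf = g * (Sinf ^ 2 + 2 * Rinf) ∧
    Rinf ^ 2 = 1 + 8 * g ^ 2 * Rinf ^ 3 := by
  have hRpos : 0 < Rinf := by rw [hR]; positivity
  have hgpos : 0 < g := by rw [hg]; positivity
  have hRg : Rinf ^ 2 = 1 + 8 * g ^ 2 * Rinf ^ 3 := by
    rw [hR, hg]; exact sq_eq_one_add_eight_mul_sq_mul_cube_of_param hlam.le
  subst hS
  refine ⟨?_, (sub_one_div_eq_mul_sq_add_iff hgpos.ne' hRpos.ne').mpr hRg, hRg⟩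
  field_simp
  ring
end

section
/- Let λ be a real number with 0 < λ < 1. Set R_∞ := √(1+10λ+λ²)/(1+λ), g := √(λ(1+λ))/(1+10λ+λ²)^{3/4}, S_∞ := (R_∞ − 1)/(2gR_∞), and for each integer k ≥ 0 define R_k := R_∞·((1−λ^k)(1−λ^{k+2}))/(1−λ^{k+1})² and S_k := S_∞ − gR_∞²·λ^k·((1−λ)(1−λ²))/((1−λ^{k+1})(1−λ^{k+2})). Then for every k ≥ 1, R_k = 1 + g·R_k·(S_{k−1} + S_k). -/
/-- The explicit closed-form solution parametrized by `λ ∈ (0,1)` satisfies the first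
family of classical slice equations `R_k = 1 + gR_k(S_{k-1} + S_k)` for `k ≥ 1`. -/
theorem stmt16 (lam : ℝ) (hlam0 : 0 < lam) (hlam1 : lam < 1)
    (Rinf g Sinf : ℝ)
    (hRinf : Rinf = Real.sqrt (1 + 10 * lam + lam ^ 2) / (1 + lam))
    (hg : g = Real.sqrt (lam * (1 + lam)) / (1 + 10 * lam + lam ^ 2) ^ ((3 : ℝ) / 4))
    (hSinf : Sinf = (Rinf - 1) / (2 * g * Rinf))
    (R S : ℕ → ℝ)
    (hR : ∀ k, R k = Rinf * ((1 - lam ^ k) * (1 - lam ^ (k + 2))) / (1 - lam ^ (k + 1)) ^ 2)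
    (hS : ∀ k, S k = Sinf - g * Rinf ^ 2 * lam ^ k * ((1 - lam) * (1 - lam ^ 2))
        / ((1 - lam ^ (k + 1)) * (1 - lam ^ (k + 2)))) :
    ∀ k, 1 ≤ k → R k = 1 + g * R k * (S (k - 1) + S k) := by
  have hlp : (0:ℝ) < 1 + lam := by linarith
  have hQ : (0:ℝ) < 1 + 10 * lam + lam ^ 2 := by nlinarith
  have hspos : 0 < Real.sqrt (1 + 10 * lam + lam ^ 2) := Real.sqrt_pos.mpr hQ
  have hRpos : 0 < Rinf := by rw [hRinf]; positivity
  have hgpos : 0 < g := by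
    rw [hg]
    apply div_pos (Real.sqrt_pos.mpr (by positivity)) (Real.rpow_pos_of_pos hQ _)
  -- the key algebraic relation g^2 * Rinf^3 = lam / (1+lam)^2
  have hs2 : Real.sqrt (1 + 10 * lam + lam ^ 2) ^ 2 = 1 + 10 * lam + lam ^ 2 :=
    Real.sq_sqrt hQ.le
  have hpow : ((1 + 10 * lam + lam ^ 2) ^ ((3 : ℝ) / 4)) ^ 2
      = Real.sqrt (1 + 10 * lam + lam ^ 2) ^ 3 := by
    rw [Real.sqrt_eq_rpow, ← Real.rpow_natCast ((1 + 10 * lam + lam ^ 2) ^ ((3:ℝ)/4)) 2,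
      ← Real.rpow_natCast ((1 + 10 * lam + lam ^ 2) ^ ((1:ℝ)/2)) 3,
      ← Real.rpow_mul hQ.le, ← Real.rpow_mul hQ.le]
    norm_num
  have hkey : g ^ 2 * Rinf ^ 3 = lam / (1 + lam) ^ 2 := by
    rw [hg, hRinf, div_pow, div_pow, hpow, Real.sq_sqrt (by positivity : (0:ℝ) ≤ lam * (1 + lam))]
    field_simp
  have h2S : 2 * g * Rinf * Sinf = Rinf - 1 := by
    rw [hSinf]
    field_simp
  intro k hk
  obtain ⟨j, rfl⟩ : ∃ j, k = j + 1 := ⟨k - 1, (Nat.succ_pred_eq_of_pos hk).symm⟩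
  have hd : ∀ m : ℕ, (1:ℝ) - lam ^ (m + 1) ≠ 0 := by
    intro m
    have : lam ^ (m + 1) < 1 := pow_lt_one₀ hlam0.le hlam1 (Nat.succ_ne_zero m)
    linarith
  have hd1 := hd j
  have hd2 := hd (j + 1)
  have hd3 := hd (j + 2)
  set u : ℝ := ((1 - lam ^ (j + 1)) * (1 - lam ^ (j + 3))) / (1 - lam ^ (j + 2)) ^ 2 with hu_def
  set T1 : ℝ := lam ^ j * ((1 - lam) * (1 - lam ^ 2))
      / ((1 - lam ^ (j + 1)) * (1 - lam ^ (j + 2))) with hT1_def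
  set T2 : ℝ := lam ^ (j + 1) * ((1 - lam) * (1 - lam ^ 2))
      / ((1 - lam ^ (j + 2)) * (1 - lam ^ (j + 3))) with hT2_def
  have hu : u = 1 - lam / (1 + lam) ^ 2 * u * (T1 + T2) := by
    rw [hu_def, hT1_def, hT2_def]
    field_simp
    ring
  have hRk : R (j + 1) = Rinf * u := by
    rw [hR]
    rw [hu_def]
    ring_nf
  have hSj : S j = Sinf - g * Rinf ^ 2 * T1 := by
    rw [hS, hT1_def]
    ring
  have hSj1 : S (j + 1) = Sinf - g * Rinf ^ 2 * T2 := by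
    rw [hS, hT2_def]
    ring
  have hkm : j + 1 - 1 = j := rfl
  rw [hkm, hRk, hSj, hSj1]
  have step : 1 + g * (Rinf * u) * ((Sinf - g * Rinf ^ 2 * T1) + (Sinf - g * Rinf ^ 2 * T2))
      = 1 + (Rinf - 1) * u - lam / (1 + lam) ^ 2 * (u * (T1 + T2)) := by
    linear_combination u * h2S - (u * (T1 + T2)) * hkey
  rw [step]
  linear_combination hu
end

section
/- Let X denote the power series variable in the ring ℚ⟦X⟧ of formal power series over ℚ. Suppose R, R' : ℕ → ℚ⟦X⟦ and S, S' : ℕ → ℚ⟦X⟧ satisfy all of the following: R 0 = 0 and R' 0 = 0; for every k ≥ 1 the constant coefficients of R k and R' k equal 1; for every k ≥ 0 the constant coefficients of S k and S' k equal 0; for every k ≥ 1, R k = 1 + X·(R k)·(S (k−1) + S k) and R' k = 1 + X·(R' k)·(S' (k−1) + S' k); and for every k ≥ 0, S k = X·((S k)² + R k + R (k+1)) and S' k = X·((S' k)² + R' k + R' (k+1)). Then R = R' and S = S'. -/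
open PowerSeries

/-! The system is contracting for the `X`-adic filtration: apart from the fixed `R 0 = 0` and
the constant `1`, each right-hand side is `X` times a polynomial in the unknowns. Hence two
solutions that agree modulo `X ^ n` agree modulo `X ^ (n + 1)`; agreeing modulo every power
of `X`, they are equal. -/

theorem Ideal.Quotient.mk_span_pow_succ_mul_eq {A : Type*} [CommRing A] {x a b : A} {n : ℕ}
    (h : Ideal.Quotient.mk (Ideal.span {x ^ n}) a = Ideal.Quotient.mk (Ideal.span {x ^ n}) b) :
    Ideal.Quotient.mk (Ideal.span {x ^ (n + 1)}) (x * a) =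
      Ideal.Quotient.mk (Ideal.span {x ^ (n + 1)}) (x * b) := by
  rw [Ideal.Quotient.eq, Ideal.mem_span_singleton] at h ⊢
  rw [← mul_sub, pow_succ']
  exact mul_dvd_mul_left x h

theorem Ideal.Quotient.mk_span_pow_zero_eq {A : Type*} [CommRing A] (x a b : A) :
    Ideal.Quotient.mk (Ideal.span {x ^ 0}) a = Ideal.Quotient.mk (Ideal.span {x ^ 0}) b := by
  rw [Ideal.Quotient.eq, Ideal.mem_span_singleton, pow_zero]
  exact one_dvd _

theorem PowerSeries.eq_of_forall_mk_span_X_pow_eq {A : Type*} [CommRing A] {f g : A⟦X⟧}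
    (h : ∀ n, Ideal.Quotient.mk (Ideal.span {X ^ n}) f = Ideal.Quotient.mk (Ideal.span {X ^ n}) g) :
    f = g := by
  ext n
  have hdvd := Ideal.mem_span_singleton.1 (Ideal.Quotient.eq.1 (h (n + 1)))
  rw [← sub_eq_zero, ← map_sub]
  exact X_pow_dvd_iff.1 hdvd n n.lt_succ_self

theorem stmt19_general (R R' S S' : ℕ → PowerSeries ℚ)
    (hR0 : R 0 = 0) (hR'0 : R' 0 = 0)
    (hReq : ∀ k, 1 ≤ k → R k = 1 + X * R k * (S (k - 1) + S k))
    (hR'eq : ∀ k, 1 ≤ k → R' k = 1 + X * R' k * (S' (k - 1) + S' k))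
    (hSeq : ∀ k, S k = X * ((S k) ^ 2 + R k + R (k + 1)))
    (hS'eq : ∀ k, S' k = X * ((S' k) ^ 2 + R' k + R' (k + 1))) :
    R = R' ∧ S = S' := by
  have agree : ∀ n k, Ideal.Quotient.mk (Ideal.span {X ^ n}) (R k) =
        Ideal.Quotient.mk (Ideal.span {X ^ n}) (R' k) ∧
      Ideal.Quotient.mk (Ideal.span {X ^ n}) (S k) =
        Ideal.Quotient.mk (Ideal.span {X ^ n}) (S' k) := by
    intro n
    induction n with
    | zero => exact fun k => ⟨Ideal.Quotient.mk_span_pow_zero_eq _ _ _,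
        Ideal.Quotient.mk_span_pow_zero_eq _ _ _⟩
    | succ n ih =>
      intro k
      constructor
      · rcases Nat.eq_zero_or_pos k with rfl | hk
        · rw [hR0, hR'0]
        · rw [hReq k hk, hR'eq k hk, mul_assoc, mul_assoc, map_add, map_add]
          congr 1
          apply Ideal.Quotient.mk_span_pow_succ_mul_eq
          simp only [map_mul, map_add, (ih k).1, (ih (k - 1)).2, (ih k).2]
      · rw [hSeq k, hS'eq k]
        apply Ideal.Quotient.mk_span_pow_succ_mul_eq
        simp only [map_add, map_pow, (ih k).1, (ih k).2, (ih (k + 1)).1]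
  exact ⟨funext fun k => eq_of_forall_mk_span_X_pow_eq fun n => (agree n k).1,
    funext fun k => eq_of_forall_mk_span_X_pow_eq fun n => (agree n k).2⟩

/-- Uniqueness of the formal power series solution of the classical slice system for
planar triangulations: any two families `(R, S)` and `(R', S')` of power series over `ℚ`
with `R 0 = 0`, constant coefficients `1` (for `R k`, `k ≥ 1`) and `0` (for `S k`),
satisfying `R k = 1 + X·R k·(S (k-1) + S k)` for `k ≥ 1` and
`S k = X·((S k)² + R k + R (k+1))` for all `k`, coincide. -/
theorem stmt19 (R R' S S' : ℕ → PowerSeries ℚ)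
    (hR0 : R 0 = 0) (hR'0 : R' 0 = 0)
    (hRc : ∀ k, 1 ≤ k → constantCoeff (R k) = 1)
    (hR'c : ∀ k, 1 ≤ k → constantCoeff (R' k) = 1)
    (hSc : ∀ k, constantCoeff (S k) = 0)
    (hS'c : ∀ k, constantCoeff (S' k) = 0)
    (hReq : ∀ k, 1 ≤ k → R k = 1 + X * R k * (S (k - 1) + S k))
    (hR'eq : ∀ k, 1 ≤ k → R' k = 1 + X * R' k * (S' (k - 1) + S' k))
    (hSeq : ∀ k, S k = X * ((S k) ^ 2 + R k + R (k + 1)))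
    (hS'eq : ∀ k, S' k = X * ((S' k) ^ 2 + R' k + R' (k + 1))) :
    R = R' ∧ S = S' :=
  stmt19_general R R' S S' hR0 hR'0 hReq hR'eq hSeq hS'eq
end
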